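/- arXiv:0711.1428 — 6 statements merged into one kernel-verified Lean document; each statement's English description precedes it below -/
import Mathlib

section
/- Let X be a proper metric space in which any two points are joined by a geodesic segment, let γ : [0,∞) → X be a geodesic ray, and let β(x) = lim_{t→∞} (t − dist(γ(t), x)) be its Busemann function. Then for every x ∈ X there exists a geodesic ray τ : [0,∞) → X with τ(0) = x such that β(τ(s)) − β(x) ≥ s for all s ≥ 0. -/
open Filter Topology

/-- In a proper geodesic metric space, for every point `x` there is a geodesic ray `τ`
starting at `x` along which the Busemann function `β` of a given geodesic ray `γ`
increases at least linearly: `β (τ s) - β x ≥ s` for all `s ≥ 0`. -/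
theorem busemann_exists_ray {X : Type*} [MetricSpace X] [ProperSpace X]
    (hgeo : ∀ x y : X, ∃ g : ℝ → X, g 0 = x ∧ g (dist x y) = y ∧
      ∀ s t : ℝ, 0 ≤ s → s ≤ dist x y → 0 ≤ t → t ≤ dist x y →
        dist (g s) (g t) = |s - t|)
    (γ : ℝ → X)
    (hγ : ∀ s t : ℝ, 0 ≤ s → 0 ≤ t → dist (γ s) (γ t) = |s - t|)
    (β : X → ℝ)
    (hβ : ∀ z : X, Tendsto (fun t : ℝ => t - dist (γ t) z) atTop (𝓝 (β z)))
    (x : X) :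
    ∃ τ : ℝ → X, τ 0 = x ∧
      (∀ s t : ℝ, 0 ≤ s → 0 ≤ t → dist (τ s) (τ t) = |s - t|) ∧
      ∀ s : ℝ, 0 ≤ s → s ≤ β (τ s) - β x := by
  -- geodesics from x to γ n
  choose g hg0 hgd hgdist using fun n : ℕ => hgeo x (γ n)
  set d : ℕ → ℝ := fun n => dist x (γ n) with hd
  have hd0 : ∀ n, 0 ≤ d n := fun n => dist_nonneg
  -- d n → ∞
  have hdlarge : ∀ n : ℕ, (n : ℝ) - dist (γ 0) x ≤ d n := by
    intro n
    have h1 : dist (γ 0) (γ n) = (n : ℝ) := by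
      have := hγ 0 n le_rfl (Nat.cast_nonneg n)
      simpa using this
    have h2 := dist_triangle (γ 0) x (γ n)
    rw [h1] at h2
    simp only [hd, dist_comm x (γ n)]
    linarith [dist_comm x (γ n) ▸ h2]
  have hdtop : Tendsto d atTop atTop := by
    apply tendsto_atTop_mono hdlarge
    exact tendsto_atTop_add_const_right _ _ tendsto_natCast_atTop_atTop
  -- β is 1-Lipschitz
  have hLip1 : ∀ y z : X, β y ≤ β z + dist y z := by
    intro y z
    refine le_of_tendsto_of_tendsto' (hβ y) ((hβ z).add_const (dist y z)) ?_
    intro t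
    have := dist_triangle (γ t) y z
    have := dist_triangle (γ t) z y
    have h := dist_comm y z
    linarith
  have hLip : LipschitzWith 1 β := by
    refine LipschitzWith.of_dist_le_mul fun y z => ?_
    rw [Real.dist_eq, NNReal.coe_one, one_mul]
    rw [abs_sub_le_iff]
    constructor
    · linarith [hLip1 y z]
    · linarith [hLip1 z y, dist_comm y z]
  -- the family of approximating maps
  set F : ℝ → ℕ → X := fun s n => g n (min (max s 0) (d n)) with hF
  have hmem : ∀ s n, F s n ∈ Metric.closedBall x (max s 0) := by
    intro s n
    have h0 : (0:ℝ) ≤ min (max s 0) (d n) := le_min (le_max_right s 0) (hd0 n)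
    have h1 : min (max s 0) (d n) ≤ d n := min_le_right _ _
    have := hgdist n (min (max s 0) (d n)) 0 h0 h1 le_rfl (hd0 n)
    rw [hg0 n] at this
    simp only [Metric.mem_closedBall, hF]
    rw [dist_comm]
    calc dist x (g n (min (max s 0) (d n)))
        = |min (max s 0) (d n) - 0| := by rw [dist_comm]; exact this
      _ = min (max s 0) (d n) := by rw [sub_zero, abs_of_nonneg h0]
      _ ≤ max s 0 := min_le_left _ _
  -- ultrafilter finer than atTop
  set φ : Ultrafilter ℕ := Ultrafilter.of atTop with hφ
  have hφle : (φ : Filter ℕ) ≤ atTop := Ultrafilter.of_le atTop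
  -- limits exist
  have key : ∀ s : ℝ, ∃ a : X, Tendsto (F s) (φ : Filter ℕ) (𝓝 a) := by
    intro s
    have hc : IsCompact (Metric.closedBall x (max s 0)) := isCompact_closedBall x _
    have hle : (φ.map (F s) : Filter X) ≤ 𝓟 (Metric.closedBall x (max s 0)) := by
      rw [le_principal_iff, Ultrafilter.coe_map, mem_map]
      exact Filter.Eventually.of_forall (hmem s)
    obtain ⟨a, _, ha⟩ := hc.ultrafilter_le_nhds (φ.map (F s)) hle
    exact ⟨a, ha⟩
  choose τ hτ using key
  -- eventually d n ≥ c
  have hdev : ∀ c : ℝ, ∀ᶠ n in (φ : Filter ℕ), c ≤ d n := fun c =>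
    hφle (hdtop.eventually_ge_atTop c)
  refine ⟨τ, ?_, ?_, ?_⟩
  · -- τ 0 = x
    have h1 : Tendsto (F 0) (φ : Filter ℕ) (𝓝 x) := by
      have : F 0 = fun n => x := by
        funext n
        simp only [hF, max_self, min_eq_left (hd0 n)]
        · exact hg0 n
      rw [this]; exact tendsto_const_nhds
    exact tendsto_nhds_unique (hτ 0) h1
  · -- geodesic ray property
    intro s t hs ht
    have h1 : Tendsto (fun n => dist (F s n) (F t n)) (φ : Filter ℕ) (𝓝 (dist (τ s) (τ t))) :=
      (hτ s).dist (hτ t)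
    have h2 : Tendsto (fun n => dist (F s n) (F t n)) (φ : Filter ℕ) (𝓝 |s - t|) := by
      refine Tendsto.congr' ?_ tendsto_const_nhds
      filter_upwards [hdev (max s t)] with n hn
      have hsd : s ≤ d n := le_trans (le_max_left s t) hn
      have htd : t ≤ d n := le_trans (le_max_right s t) hn
      have : F s n = g n s := by
        simp only [hF, max_eq_left hs, min_eq_left hsd]
      have h' : F t n = g n t := by
        simp only [hF, max_eq_left ht, min_eq_left htd]
      rw [this, h', hgdist n s t hs hsd ht htd]
    exact tendsto_nhds_unique h1 h2
  · -- Busemann estimate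
    intro s hs
    have hkey : ∀ᶠ n : ℕ in (φ : Filter ℕ), s + ((n : ℝ) - d n) ≤ β (F s n) := by
      filter_upwards [hdev s] with n hn
      have hFs : F s n = g n s := by
        simp only [hF, max_eq_left hs, min_eq_left hn]
      -- estimate β (g n s) via the limit
      refine ge_of_tendsto (hβ (F s n)) ?_
      filter_upwards [eventually_ge_atTop (n : ℝ)] with t htn
      have h1 : dist (γ t) (γ n) = t - (n : ℝ) := by
        rw [hγ t n (le_trans (Nat.cast_nonneg n) htn) (Nat.cast_nonneg n),
          abs_of_nonneg (by linarith)]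
      have h2 : dist (γ n) (F s n) = d n - s := by
        rw [hFs]
        have := hgdist n (d n) s (hd0 n) le_rfl hs hn
        rw [hgd n] at this
        rw [this, abs_of_nonneg (by linarith)]
      have h3 := dist_triangle (γ t) (γ n) (F s n)
      rw [h1, h2] at h3
      linarith
    have h1 : Tendsto (fun n : ℕ => s + ((n : ℝ) - d n)) (φ : Filter ℕ) (𝓝 (s + β x)) := by
      refine Tendsto.const_add s ?_
      have h2 : Tendsto (fun n : ℕ => (n : ℝ) - dist (γ n) x) atTop (𝓝 (β x)) :=
        (hβ x).comp tendsto_natCast_atTop_atTop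
      have : (fun n : ℕ => (n : ℝ) - d n) = fun n : ℕ => (n : ℝ) - dist (γ n) x := by
        funext n; rw [hd]; rw [dist_comm]
      rw [this]
      exact h2.mono_left hφle
    have h2 : Tendsto (fun n => β (F s n)) (φ : Filter ℕ) (𝓝 (β (τ s))) :=
      (hLip.continuous.tendsto _).comp (hτ s)
    have := le_of_tendsto_of_tendsto h1 h2 hkey
    linarith
end

section
/- Let X be a proper metric space in which any two points are joined by a geodesic segment, let γ : [0,∞) → X be a geodesic ray, and let β(x) = lim_{t→∞} (t − dist(γ(t), x)) be its Busemann function. Then for every x ∈ X and every r > 0 there exists y ∈ X with 0 < dist(x, y) < r and |β(y) − β(x)| = dist(x, y); in particular the pointwise Lipschitz constant of β at every point equals 1. -/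
open Filter Topology

/-- In a proper geodesic metric space, the Busemann function `β` of a geodesic ray `γ`
attains its Lipschitz constant 1 at every point: for every `x` and every `r > 0` there
is a point `y` with `0 < dist x y < r` and `|β y - β x| = dist x y`. -/
theorem busemann_pointwise_lipschitz_one {X : Type*} [MetricSpace X] [ProperSpace X]
    (hgeo : ∀ x y : X, ∃ g : ℝ → X, g 0 = x ∧ g (dist x y) = y ∧
      ∀ s t : ℝ, 0 ≤ s → s ≤ dist x y → 0 ≤ t → t ≤ dist x y →
        dist (g s) (g t) = |s - t|)
    (γ : ℝ → X)
    (hγ : ∀ s t : ℝ, 0 ≤ s → 0 ≤ t → dist (γ s) (γ t) = |s - t|)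
    (β : X → ℝ)
    (hβ : ∀ z : X, Tendsto (fun t : ℝ => t - dist (γ t) z) atTop (𝓝 (β z)))
    (x : X) (r : ℝ) (hr : 0 < r) :
    ∃ y : X, 0 < dist x y ∧ dist x y < r ∧ |β y - β x| = dist x y := by
  -- β is 1-Lipschitz (upper bound in each direction)
  have lip : ∀ a b : X, β a - β b ≤ dist a b := by
    intro a b
    have h : Tendsto (fun t : ℝ => (t - dist (γ t) a) - (t - dist (γ t) b)) atTop
        (𝓝 (β a - β b)) := (hβ a).sub (hβ b)
    refine le_of_tendsto h (Eventually.of_forall fun t => ?_)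
    have : dist (γ t) b - dist (γ t) a ≤ dist a b := by
      have := abs_dist_sub_le b a (γ t)
      rw [dist_comm b (γ t), dist_comm a (γ t), dist_comm b a] at this
      nlinarith [abs_nonneg (dist (γ t) b - dist (γ t) a),
        le_abs_self (dist (γ t) b - dist (γ t) a)]
    linarith
  -- lower bound for Busemann function
  have lower : ∀ (z : X) (s : ℝ), 0 ≤ s → s - dist (γ s) z ≤ β z := by
    intro z s hs
    refine ge_of_tendsto (hβ z) ?_
    filter_upwards [eventually_ge_atTop s] with t ht
    have h1 : dist (γ t) z ≤ dist (γ t) (γ s) + dist (γ s) z := dist_triangle _ _ _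
    have h2 : dist (γ t) (γ s) = |t - s| := hγ t s (hs.trans ht) hs
    rw [abs_of_nonneg (by linarith)] at h2
    rw [h2] at h1
    linarith
  set ε := r / 2 with hε
  have hε0 : 0 < ε := by positivity
  -- choose geodesics
  choose g hg0 hgD hgdist using hgeo
  set T : ℕ → ℝ := fun n => dist x (γ 0) + ε + n with hT
  have hTnn : ∀ n, 0 ≤ T n := fun n => by
    have := dist_nonneg (x := x) (y := γ 0)
    have : (0:ℝ) ≤ n := Nat.cast_nonneg n
    simp only [hT]; positivity
  have hD : ∀ n, ε ≤ dist x (γ (T n)) := by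
    intro n
    have h1 : dist (γ 0) (γ (T n)) = T n := by
      rw [hγ 0 (T n) le_rfl (hTnn n)]
      rw [abs_sub_comm, abs_of_nonneg (by linarith [hTnn n])]; ring
    have h2 : dist (γ 0) (γ (T n)) ≤ dist (γ 0) x + dist x (γ (T n)) :=
      dist_triangle _ _ _
    rw [dist_comm (γ 0) x] at h2
    have : (0:ℝ) ≤ n := Nat.cast_nonneg n
    simp only [hT] at h1 ⊢
    linarith [h1 ▸ h2]
  set y : ℕ → X := fun n => g x (γ (T n)) ε with hy
  have hdxy : ∀ n, dist x (y n) = ε := by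
    intro n
    have := hgdist x (γ (T n)) 0 ε le_rfl dist_nonneg hε0.le (hD n)
    rw [hg0 x (γ (T n))] at this
    simpa [abs_of_nonneg hε0.le] using this
  have hdyγ : ∀ n, dist (y n) (γ (T n)) = dist x (γ (T n)) - ε := by
    intro n
    have := hgdist x (γ (T n)) ε (dist x (γ (T n))) hε0.le (hD n)
      dist_nonneg le_rfl
    rw [hgD x (γ (T n))] at this
    rw [hy]
    rw [this, abs_of_nonpos (by linarith [hD n])]; ring
  -- squeeze for β (y n)
  set a : ℕ → ℝ := fun n => T n - dist (γ (T n)) x with ha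
  have hlow : ∀ n, a n + ε ≤ β (y n) := by
    intro n
    have h := lower (y n) (T n) (hTnn n)
    have : dist (γ (T n)) (y n) = dist (γ (T n)) x - ε := by
      rw [dist_comm (γ (T n)) (y n), hdyγ n, dist_comm x (γ (T n))]
    rw [this] at h
    simp only [ha]
    linarith
  have hhigh : ∀ n, β (y n) ≤ β x + ε := by
    intro n
    have := lip (y n) x
    rw [dist_comm (y n) x, hdxy n] at this
    linarith
  have hTa : Tendsto T atTop atTop := by
    simp only [hT]
    exact tendsto_atTop_add_const_left _ _ tendsto_natCast_atTop_atTop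
  have haT : Tendsto a atTop (𝓝 (β x)) := (hβ x).comp hTa
  have hβy : Tendsto (fun n => β (y n)) atTop (𝓝 (β x + ε)) := by
    refine tendsto_of_tendsto_of_tendsto_of_le_of_le
      (haT.add_const ε) tendsto_const_nhds hlow hhigh
  -- compactness : extract a convergent subsequence
  have hmem : ∀ n, y n ∈ Metric.closedBall x ε := fun n => by
    simp [Metric.mem_closedBall, dist_comm, (hdxy n).le]
  obtain ⟨z, -, φ, hφ, hzt⟩ :=
    (isCompact_closedBall x ε).tendsto_subseq hmem
  have hβlip : LipschitzWith 1 β := by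
    refine LipschitzWith.of_dist_le_mul fun a b => ?_
    rw [Real.dist_eq, NNReal.coe_one, one_mul]
    exact abs_sub_le_iff.2 ⟨lip a b, by rw [dist_comm]; exact lip b a⟩
  have h1 : Tendsto (fun k => β (y (φ k))) atTop (𝓝 (β z)) :=
    (hβlip.continuous.tendsto z).comp hzt
  have h2 : Tendsto (fun k => β (y (φ k))) atTop (𝓝 (β x + ε)) :=
    hβy.comp hφ.tendsto_atTop
  have hβz : β z = β x + ε := tendsto_nhds_unique h1 h2
  have hdz : dist x z = ε := by
    have h3 : Tendsto (fun k => dist x (y (φ k))) atTop (𝓝 (dist x z)) :=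
      ((continuous_const.dist continuous_id).tendsto z).comp hzt
    have h4 : Tendsto (fun k => dist x (y (φ k))) atTop (𝓝 ε) := by
      simp only [hdxy]; exact tendsto_const_nhds
    exact tendsto_nhds_unique h3 h4
  refine ⟨z, by rw [hdz]; exact hε0, by rw [hdz]; linarith, ?_⟩
  rw [hβz, hdz]
  simp [abs_of_nonneg hε0.le]
end

section
/- Let A be a real symmetric 16×16 matrix (indexed by 1 ≤ i, j ≤ 16, so A_{ij} = A_{ji}) whose top-left 8×8 block has vanishing trace: ∑_{i=1}^{8} A_{ii} = 0. Then ∑_{i=1}^{16} ∑_{j=1}^{16} A_{ij}² ≥ (8/7)·∑_{j=1}^{16} A_{1j}². (This is the Hessian inequality satisfied by a Cayley-harmonic function on a manifold with holonomy Spin(9), yielding the refined Bochner inequality |∇²f|² ≥ (8/7)|∇|∇f||².) -/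
/-!
Row `1` of `A` (row `0` in the Lean indexing) enters `∑ᵢⱼ Aᵢⱼ²` twice: once as a row and, by
symmetry, once as a column, where `A₁₁²` is the only overlap. The trace condition writes `A₁₁` as minus the sum of the other seven
diagonal entries of the block, so by Cauchy–Schwarz `A₁₁² ≤ 7 ∑_{i=2}^{8} Aᵢᵢ²`, and these entries
lie outside row and column `1`. Hence `|A|² ≥ 2r - A₁₁² + A₁₁²/7 ≥ (8/7) r` for `r` the squared
norm of row `1`, using `A₁₁² ≤ r`.
-/

open Finset

section

variable {R : Type*} [Field R] [LinearOrder R] [IsStrictOrderedRing R] {ι : Type*}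

theorem sq_le_card_erase_mul_sum_sq_of_sum_eq_zero [DecidableEq ι] {s : Finset ι} {i₀ : ι}
    (hi₀ : i₀ ∈ s) {f : ι → R} (hf : ∑ i ∈ s, f i = 0) :
    f i₀ ^ 2 ≤ (#s - 1 : R) * ∑ i ∈ s.erase i₀, f i ^ 2 := by
  have hrest : ∑ i ∈ s.erase i₀, f i = -f i₀ := by
    rw [← add_sum_erase s f hi₀] at hf
    linear_combination hf
  calc f i₀ ^ 2 = (∑ i ∈ s.erase i₀, f i) ^ 2 := by rw [hrest, neg_sq]
    _ ≤ #(s.erase i₀) * ∑ i ∈ s.erase i₀, f i ^ 2 := sq_sum_le_card_mul_sum_sq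
    _ = (#s - 1 : R) * ∑ i ∈ s.erase i₀, f i ^ 2 := by
      rw [card_erase_of_mem hi₀, Nat.cast_pred (card_pos.mpr ⟨i₀, hi₀⟩)]

variable [Fintype ι] [DecidableEq ι]

theorem Matrix.sq_add_diag_sq_le_sum_row_sq (A : Matrix ι ι R) {i j : ι} (hij : j ≠ i) :
    A i j ^ 2 + A i i ^ 2 ≤ ∑ k, A i k ^ 2 := by
  rw [← sum_pair (f := fun k => A i k ^ 2) hij]
  exact sum_le_univ_sum_of_nonneg fun k => sq_nonneg (A i k)

theorem Matrix.IsSymm.two_mul_sum_row_sq_sub_add_sum_diag_sq_le {A : Matrix ι ι R}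
    (hA : A.IsSymm) (i₀ : ι) :
    2 * ∑ j, A i₀ j ^ 2 - A i₀ i₀ ^ 2 + ∑ i ∈ univ.erase i₀, A i i ^ 2 ≤
      ∑ i, ∑ j, A i j ^ 2 := by
  have hcol : ∑ i ∈ univ.erase i₀, A i i₀ ^ 2 = ∑ j, A i₀ j ^ 2 - A i₀ i₀ ^ 2 := by
    simp only [hA.apply i₀]
    rw [← add_sum_erase univ (fun j => A i₀ j ^ 2) (mem_univ i₀)]
    ring
  have hrows : ∑ i ∈ univ.erase i₀, (A i i₀ ^ 2 + A i i ^ 2) ≤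
      ∑ i ∈ univ.erase i₀, ∑ j, A i j ^ 2 :=
    sum_le_sum fun i hi => A.sq_add_diag_sq_le_sum_row_sq (ne_of_mem_erase hi).symm
  rw [sum_add_distrib, hcol] at hrows
  rw [← add_sum_erase univ (fun i => ∑ j, A i j ^ 2) (mem_univ i₀)]
  linarith

theorem Matrix.IsSymm.card_mul_sum_row_sq_le {A : Matrix ι ι R} (hA : A.IsSymm)
    {s : Finset ι} {i₀ : ι} (hi₀ : i₀ ∈ s) (hs : 2 ≤ #s) (htrace : ∑ i ∈ s, A i i = 0) :
    (#s : R) * ∑ j, A i₀ j ^ 2 ≤ (#s - 1 : R) * ∑ i, ∑ j, A i j ^ 2 := by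
  have hm : (1 : R) ≤ #s - 1 := by
    have : (2 : R) ≤ #s := by exact_mod_cast hs
    linarith
  have hdiag : A i₀ i₀ ^ 2 ≤ (#s - 1 : R) * ∑ i ∈ univ.erase i₀, A i i ^ 2 := by
    refine (sq_le_card_erase_mul_sum_sq_of_sum_eq_zero hi₀ htrace).trans ?_
    refine mul_le_mul_of_nonneg_left ?_ (by linarith)
    exact sum_le_sum_of_subset_of_nonneg (erase_subset_erase i₀ (subset_univ s))
      fun i _ _ => sq_nonneg (A i i)
  have hrow : A i₀ i₀ ^ 2 ≤ ∑ j, A i₀ j ^ 2 :=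
    single_le_sum (fun j _ => sq_nonneg (A i₀ j)) (mem_univ i₀)
  have htotal := hA.two_mul_sum_row_sq_sub_add_sum_diag_sq_le i₀
  -- `(m - 1)|A|² ≥ (m - 1)(2r - a²) + a² = m r + (m - 2)(r - a²)` where `m = #s`,
  -- `a = A i₀ i₀` and `r` is the squared norm of row `i₀`
  nlinarith

end

/-- Hessian inequality for Cayley-harmonic functions: if `A` is a symmetric real
16×16 matrix (indices `0, …, 15` corresponding to `1, …, 16`) whose top-left 8×8 block
is trace-free, then `∑ᵢ ∑ⱼ Aᵢⱼ² ≥ (8/7) ∑ⱼ A₁ⱼ²` (here the first row is row `0`). -/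
theorem cayley_hessian_inequality (A : Matrix (Fin 16) (Fin 16) ℝ)
    (hsymm : ∀ i j : Fin 16, A i j = A j i)
    (htrace : ∑ i ∈ Finset.univ.filter (fun i : Fin 16 => (i : ℕ) < 8), A i i = 0) :
    (8 / 7 : ℝ) * ∑ j : Fin 16, (A 0 j) ^ 2 ≤ ∑ i : Fin 16, ∑ j : Fin 16, (A i j) ^ 2 := by
  have hA : A.IsSymm := Matrix.IsSymm.ext fun i j => hsymm j i
  have h := hA.card_mul_sum_row_sq_le (i₀ := 0) (by decide) (by decide) htrace
  have hcard : #(univ.filter fun i : Fin 16 => (i : ℕ) < 8) = 8 := by decide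
  rw [hcard] at h
  norm_num at h
  linarith
end

section
/- Let n ≥ 1 and let A be a real symmetric (2n)×(2n) matrix (indexed by 1 ≤ i, j ≤ 2n, so A_{ij} = A_{ji}) satisfying A_{ii} + A_{i+n,i+n} = 0 for every 1 ≤ i ≤ n. Then ∑_{i=1}^{2n} ∑_{j=1}^{2n} A_{ij}² ≥ 2·∑_{j=1}^{2n} A_{1j}². (This is the Hessian inequality used in the vanishing theorem for L² harmonic 1-forms on Kähler manifolds, giving |∇ω|² ≥ 2|∇|ω||².) -/
open Finset

/-! The squared entries of row `a` of a symmetric matrix appear twice in `∑ᵢ ∑ⱼ Aᵢⱼ²`: once as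
row `a` and once as column `a`, except that `Aₐₐ²` is counted only once. The trace condition
supplies the missing term: `A_{bb} = -Aₐₐ` for some `b ≠ a`, and `A_{bb}²` lies outside both
row and column `a`. -/

theorem Matrix.IsSymm.two_mul_sum_row_sq_le_sum_sq {ι R : Type*} [Fintype ι] [DecidableEq ι]
    [CommRing R] [LinearOrder R] [IsStrictOrderedRing R] {A : Matrix ι ι R} (hA : A.IsSymm)
    {a b : ι} (hab : a ≠ b) (hdiag : A a a + A b b = 0) :
    2 * ∑ j, A a j ^ 2 ≤ ∑ i, ∑ j, A i j ^ 2 := by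
  have hsplit (f : ι → R) : ∑ i, f i = f a + ∑ i ∈ univ.erase a, f i :=
    (add_sum_erase univ f (mem_univ a)).symm
  have hcol : ∑ i, A i a ^ 2 = ∑ j, A a j ^ 2 :=
    sum_congr rfl fun i _ => by rw [hA.apply a i]
  have hbb : A b b ^ 2 = A a a ^ 2 := by rw [eq_neg_of_add_eq_zero_right hdiag, neg_sq]
  have hb : A b b ^ 2 ≤ ∑ i ∈ univ.erase a, ∑ j ∈ univ.erase a, A i j ^ 2 := by
    have hb_mem : b ∈ univ.erase a := mem_erase.2 ⟨hab.symm, mem_univ b⟩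
    calc A b b ^ 2 ≤ ∑ j ∈ univ.erase a, A b j ^ 2 :=
          single_le_sum (fun j _ => sq_nonneg (A b j)) hb_mem
      _ ≤ _ := single_le_sum (f := fun i => ∑ j ∈ univ.erase a, A i j ^ 2)
          (fun i _ => sum_nonneg fun j _ => sq_nonneg (A i j)) hb_mem
  calc 2 * ∑ j, A a j ^ 2
      = ∑ j, A a j ^ 2 + ∑ i ∈ univ.erase a, A i a ^ 2 + A b b ^ 2 := by
        rw [← hcol, hsplit fun i => A i a ^ 2, hbb]; ring
    _ ≤ ∑ j, A a j ^ 2 + ∑ i ∈ univ.erase a, A i a ^ 2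
          + ∑ i ∈ univ.erase a, ∑ j ∈ univ.erase a, A i j ^ 2 := by gcongr
    _ = ∑ i, ∑ j, A i j ^ 2 := by
        rw [hsplit fun i => ∑ j, A i j ^ 2, add_assoc, ← sum_add_distrib]
        exact congrArg _ (sum_congr rfl fun i _ => (hsplit fun j => A i j ^ 2).symm)

/-- Hessian inequality on Kähler manifolds: if `A` is a symmetric real `2n × 2n` matrix
(indices `0, …, 2n-1` corresponding to `1, …, 2n`) with `Aᵢᵢ + A_{i+n,i+n} = 0` for every
`i` in the first block, then `∑ᵢ ∑ⱼ Aᵢⱼ² ≥ 2 ∑ⱼ A₁ⱼ²` (the first row is row `0`). -/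
theorem kahler_hessian_inequality (n : ℕ) (hn : 1 ≤ n)
    (A : Matrix (Fin (2 * n)) (Fin (2 * n)) ℝ)
    (hsymm : ∀ i j : Fin (2 * n), A i j = A j i)
    (htrace : ∀ i j : Fin (2 * n), (i : ℕ) < n → (j : ℕ) = i + n → A i i + A j j = 0) :
    (2 : ℝ) * ∑ j : Fin (2 * n), (A ⟨0, by omega⟩ j) ^ 2 ≤
      ∑ i : Fin (2 * n), ∑ j : Fin (2 * n), (A i j) ^ 2 := by
  have hA : A.IsSymm := Matrix.IsSymm.ext fun i j => hsymm j i
  exact hA.two_mul_sum_row_sq_le_sum_sq (b := ⟨n, by omega⟩)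
    (Fin.ne_of_val_ne (Nat.lt_of_succ_le hn).ne) (htrace _ _ hn (zero_add n).symm)
end

section
/- Let n ≥ 1 and let A be a real symmetric (4n)×(4n) matrix (indexed by 1 ≤ i, j ≤ 4n, so A_{ij} = A_{ji}) satisfying A_{ii} + A_{i+n,i+n} + A_{i+2n,i+2n} + A_{i+3n,i+3n} = 0 for every 1 ≤ i ≤ n. Then ∑_{i=1}^{4n} ∑_{j=1}^{4n} A_{ij}² ≥ (4/3)·∑_{j=1}^{4n} A_{1j}². (This is the Hessian inequality used in the vanishing theorem for L² harmonic 1-forms on quaternionic Kähler manifolds, giving |∇ω|² ≥ (4/3)|∇|ω||².) -/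
open Finset

set_option maxHeartbeats 1600000

/-- Hessian inequality on quaternionic Kähler manifolds: if `A` is a symmetric real
`4n × 4n` matrix (indices `0, …, 4n-1` corresponding to `1, …, 4n`) with
`Aᵢᵢ + A_{i+n,i+n} + A_{i+2n,i+2n} + A_{i+3n,i+3n} = 0` for every `i` in the first block,
then `∑ᵢ ∑ⱼ Aᵢⱼ² ≥ (4/3) ∑ⱼ A₁ⱼ²` (the first row is row `0`). -/
theorem quaternionic_kahler_hessian_inequality (n : ℕ) (hn : 1 ≤ n)
    (A : Matrix (Fin (4 * n)) (Fin (4 * n)) ℝ)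
    (hsymm : ∀ i j : Fin (4 * n), A i j = A j i)
    (htrace : ∀ i j k l : Fin (4 * n), (i : ℕ) < n → (j : ℕ) = i + n →
      (k : ℕ) = i + 2 * n → (l : ℕ) = i + 3 * n →
      A i i + A j j + A k k + A l l = 0) :
    (4 / 3 : ℝ) * ∑ j : Fin (4 * n), (A ⟨0, by omega⟩ j) ^ 2 ≤
      ∑ i : Fin (4 * n), ∑ j : Fin (4 * n), (A i j) ^ 2 := by
  set i0 : Fin (4 * n) := ⟨0, by omega⟩ with hi0
  set e1 : Fin (4 * n) := ⟨n, by omega⟩ with he1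
  set e2 : Fin (4 * n) := ⟨2 * n, by omega⟩ with he2
  set e3 : Fin (4 * n) := ⟨3 * n, by omega⟩ with he3
  have h0 : (i0 : ℕ) < n := by simp [hi0]; omega
  have h1 : (e1 : ℕ) = (i0 : ℕ) + n := by simp [hi0, he1]
  have h2 : (e2 : ℕ) = (i0 : ℕ) + 2 * n := by simp [hi0, he2]
  have h3 : (e3 : ℕ) = (i0 : ℕ) + 3 * n := by simp [hi0, he3]
  have htr : A i0 i0 + A e1 e1 + A e2 e2 + A e3 e3 = 0 :=
    htrace i0 e1 e2 e3 h0 h1 h2 h3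
  set S : ℝ := ∑ j : Fin (4 * n), (A i0 j) ^ 2 with hS
  have hA00 : A i0 i0 ^ 2 ≤ S := by
    rw [hS]
    exact Finset.single_le_sum (f := fun j => A i0 j ^ 2) (fun j _ => sq_nonneg _) (mem_univ i0)
  -- distinctness
  have h10 : e1 ≠ i0 := by simp [Fin.ext_iff, hi0, he1]; omega
  have h20 : e2 ≠ i0 := by simp [Fin.ext_iff, hi0, he2]; omega
  have h30 : e3 ≠ i0 := by simp [Fin.ext_iff, hi0, he3]; omega
  have h12 : e1 ≠ e2 := by simp [Fin.ext_iff, he1, he2]; omega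
  have h13 : e1 ≠ e3 := by simp [Fin.ext_iff, he1, he3]; omega
  have h23 : e2 ≠ e3 := by simp [Fin.ext_iff, he2, he3]; omega
  -- per-row lower bounds
  have step1 : ∀ i : Fin (4 * n),
      A i i0 ^ 2 + (if i ∈ ({e1, e2, e3} : Finset (Fin (4 * n))) then A i i ^ 2 else 0)
        ≤ ∑ j : Fin (4 * n), (A i j) ^ 2 := by
    intro i
    by_cases h : i ∈ ({e1, e2, e3} : Finset (Fin (4 * n)))
    · have hne : i0 ≠ i := by
        simp only [Finset.mem_insert, Finset.mem_singleton] at h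
        rcases h with h | h | h <;> subst h
        exacts [h10.symm, h20.symm, h30.symm]
      rw [if_pos h]
      calc A i i0 ^ 2 + A i i ^ 2 = ∑ j ∈ ({i0, i} : Finset (Fin (4 * n))), (A i j) ^ 2 := by
            rw [Finset.sum_pair hne]
        _ ≤ ∑ j : Fin (4 * n), (A i j) ^ 2 :=
            Finset.sum_le_sum_of_subset_of_nonneg (Finset.subset_univ _)
              (fun j _ _ => sq_nonneg _)
    · rw [if_neg h]
      simpa using Finset.single_le_sum (f := fun j => (A i j) ^ 2)
        (fun j _ => sq_nonneg _) (mem_univ i0)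
  -- split off row i0
  have hsplit : ∑ i : Fin (4 * n), ∑ j : Fin (4 * n), (A i j) ^ 2
      = S + ∑ i ∈ Finset.univ.erase i0, ∑ j : Fin (4 * n), (A i j) ^ 2 := by
    rw [hS, ← Finset.add_sum_erase _ _ (mem_univ i0)]
  have hbound : ∑ i ∈ Finset.univ.erase i0,
      (A i i0 ^ 2 + (if i ∈ ({e1, e2, e3} : Finset (Fin (4 * n))) then A i i ^ 2 else 0))
      ≤ ∑ i ∈ Finset.univ.erase i0, ∑ j : Fin (4 * n), (A i j) ^ 2 :=
    Finset.sum_le_sum (fun i _ => step1 i)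
  rw [Finset.sum_add_distrib] at hbound
  -- column sum over erase i0
  have hcol : ∑ i ∈ Finset.univ.erase i0, A i i0 ^ 2 = S - A i0 i0 ^ 2 := by
    have : ∑ i : Fin (4 * n), A i i0 ^ 2 = S := by
      rw [hS]; exact Finset.sum_congr rfl (fun i _ => by rw [hsymm])
    rw [Finset.sum_erase_eq_sub (mem_univ i0), this]
  -- diagonal part
  have hsub : ({e1, e2, e3} : Finset (Fin (4 * n))) ⊆ Finset.univ.erase i0 := by
    intro x hx
    simp only [Finset.mem_insert, Finset.mem_singleton] at hx
    rcases hx with h | h | h <;> subst h <;>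
      exact Finset.mem_erase.mpr ⟨by assumption, mem_univ _⟩
  have hdiag : ∑ i ∈ Finset.univ.erase i0,
      (if i ∈ ({e1, e2, e3} : Finset (Fin (4 * n))) then A i i ^ 2 else 0)
      = A e1 e1 ^ 2 + A e2 e2 ^ 2 + A e3 e3 ^ 2 := by
    rw [Finset.sum_ite_mem, Finset.inter_eq_right.mpr hsub]
    rw [Finset.sum_insert (by simp [h12, h13]), Finset.sum_pair h23]
    ring
  rw [hcol, hdiag] at hbound
  have ha : A i0 i0 = -(A e1 e1 + A e2 e2 + A e3 e3) := by linarith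
  have hq : A i0 i0 ^ 2 ≤ 3 * (A e1 e1 ^ 2 + A e2 e2 ^ 2 + A e3 e3 ^ 2) := by
    rw [ha]
    nlinarith [sq_nonneg (A e1 e1 - A e2 e2), sq_nonneg (A e1 e1 - A e3 e3),
      sq_nonneg (A e2 e2 - A e3 e3), ha]
  rw [hsplit]
  linarith
end

section
/- Let B be a real symmetric 16×16 matrix (indexed by 1 ≤ A, C ≤ 16, so B_{AC} = B_{CA}) satisfying ∑_{i=2}^{8} B_{ii} = −14, ∑_{α=9}^{16} B_{αα} = −8, and ∑_{A=1}^{16} ∑_{C=1}^{16} B_{AC}² = 36. Then B is diagonal with B_{11} = 0, B_{ii} = −2 for 2 ≤ i ≤ 8, and B_{αα} = −1 for 9 ≤ α ≤ 16; that is, B_{AC} = −c_A·δ_{AC} where c₁ = 0, c_A = 2 for 2 ≤ A ≤ 8, and c_A = 1 for 9 ≤ A ≤ 16. (This is the rigidity of the Hessian of the Busemann function in the splitting theorem for manifolds with Spin(9) holonomy and λ₁(M) = 121.) -/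
open Finset

/-!
Write `D` for the diagonal matrix with entries `0, -2, …, -2, -1, …, -1`. Expanding the square,
`∑ (B - D)² = ∑ B² - ∑ᵢ (2 Dᵢᵢ Bᵢᵢ - Dᵢᵢ²)`, and the subtracted term depends on the diagonal of `B`
only through the two block traces: it equals `-4·(-14) - 7·4 - 2·(-8) - 8 = 36 = ∑ B²`.
Hence `B - D` has vanishing Frobenius norm.
-/

namespace Matrix

variable {n : Type*}

theorem sum_sum_sub_diagonal_sq [Fintype n] [DecidableEq n] (B : Matrix n n ℝ) (d : n → ℝ) :
    ∑ i, ∑ j, (B i j - diagonal d i j) ^ 2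
      = ∑ i, ∑ j, B i j ^ 2 - ∑ i, (2 * d i * B i i - d i ^ 2) := by
  rw [← sum_sub_distrib]
  refine sum_congr rfl fun i _ => ?_
  have hrow : ∀ j, (B i j - diagonal d i j) ^ 2
      = B i j ^ 2 - if i = j then 2 * d i * B i i - d i ^ 2 else 0 := by
    intro j
    by_cases hij : i = j
    · subst hij; simp only [diagonal_apply_eq, if_true]; ring
    · simp [hij]
  simp only [hrow, sum_sub_distrib, sum_ite_eq, mem_univ, if_true]

theorem eq_diagonal_of_sum_sum_sq_eq [Fintype n] [DecidableEq n] (B : Matrix n n ℝ) (d : n → ℝ)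
    (h : ∑ i, ∑ j, B i j ^ 2 = ∑ i, (2 * d i * B i i - d i ^ 2)) :
    B = diagonal d := by
  have hzero : ∑ i, ∑ j, (B i j - diagonal d i j) ^ 2 = 0 := by
    rw [sum_sum_sub_diagonal_sq, h, sub_self]
  ext i j
  have hrow := (sum_eq_zero_iff_of_nonneg fun i _ =>
    sum_nonneg fun j _ => sq_nonneg (B i j - diagonal d i j)).mp hzero i (mem_univ i)
  have hij := (sum_eq_zero_iff_of_nonneg fun j _ =>
    sq_nonneg (B i j - diagonal d i j)).mp hrow j (mem_univ j)
  exact sub_eq_zero.mp (pow_eq_zero_iff two_ne_zero |>.mp hij)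

theorem sum_two_mul_diag_sub_sq_of_eqOn (B : Matrix n n ℝ) {d : n → ℝ} {s : Finset n} {c : ℝ}
    (hd : ∀ i ∈ s, d i = c) :
    ∑ i ∈ s, (2 * d i * B i i - d i ^ 2) = 2 * c * ∑ i ∈ s, B i i - #s * c ^ 2 := by
  rw [sum_congr rfl fun i hi => by rw [hd i hi], sum_sub_distrib, ← mul_sum, sum_const,
    nsmul_eq_mul]

end Matrix

open Matrix

def spin9HessianDiag (i : Fin 16) : ℝ :=
  if (i : ℕ) = 0 then 0 else if (i : ℕ) < 8 then -2 else -1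

theorem spin9HessianDiag_zero : spin9HessianDiag 0 = 0 := rfl

theorem spin9HessianDiag_of_lt_eight {i : Fin 16} (h1 : 1 ≤ (i : ℕ)) (h8 : (i : ℕ) < 8) :
    spin9HessianDiag i = -2 := by
  simp only [spin9HessianDiag]
  split_ifs <;> first | rfl | omega

theorem spin9HessianDiag_of_eight_le {i : Fin 16} (h : 8 ≤ (i : ℕ)) : spin9HessianDiag i = -1 := by
  simp only [spin9HessianDiag]
  split_ifs <;> first | rfl | omega

theorem sum_fin16_eq_add_blocks (f : Fin 16 → ℝ) :
    ∑ i, f i = f 0 + ∑ i ∈ univ.filter (fun i : Fin 16 => 1 ≤ (i : ℕ) ∧ (i : ℕ) < 8), f i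
      + ∑ i ∈ univ.filter (fun i : Fin 16 => 8 ≤ (i : ℕ)), f i := by
  have huniv : (univ : Finset (Fin 16)) = insert 0 (univ.filter (fun i : Fin 16 => 1 ≤ (i : ℕ) ∧
      (i : ℕ) < 8) ∪ univ.filter (fun i : Fin 16 => 8 ≤ (i : ℕ))) := by decide
  conv_lhs => rw [huniv]
  rw [sum_insert (by decide), sum_union (by decide), add_assoc]

theorem sum_two_mul_spin9HessianDiag_sub_sq (B : Matrix (Fin 16) (Fin 16) ℝ)
    (h1 : ∑ i ∈ univ.filter (fun i : Fin 16 => 1 ≤ (i : ℕ) ∧ (i : ℕ) < 8), B i i = -14)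
    (h2 : ∑ i ∈ univ.filter (fun i : Fin 16 => 8 ≤ (i : ℕ)), B i i = -8) :
    ∑ i, (2 * spin9HessianDiag i * B i i - spin9HessianDiag i ^ 2) = 36 := by
  have hcard1 : #(univ.filter fun i : Fin 16 => 1 ≤ (i : ℕ) ∧ (i : ℕ) < 8) = 7 := by decide
  have hcard2 : #(univ.filter fun i : Fin 16 => 8 ≤ (i : ℕ)) = 8 := by decide
  rw [sum_fin16_eq_add_blocks,
    sum_two_mul_diag_sub_sq_of_eqOn B fun i hi =>
      spin9HessianDiag_of_lt_eight (mem_filter.mp hi).2.1 (mem_filter.mp hi).2.2,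
    sum_two_mul_diag_sub_sq_of_eqOn B fun i hi =>
      spin9HessianDiag_of_eight_le (mem_filter.mp hi).2,
    h1, h2, hcard1, hcard2, spin9HessianDiag_zero]
  norm_num

theorem spin9_busemann_hessian_rigidity_general (B : Matrix (Fin 16) (Fin 16) ℝ)
    (h1 : ∑ i ∈ Finset.univ.filter (fun i : Fin 16 => 1 ≤ (i : ℕ) ∧ (i : ℕ) < 8), B i i
      = -14)
    (h2 : ∑ i ∈ Finset.univ.filter (fun i : Fin 16 => 8 ≤ (i : ℕ)), B i i = -8)
    (h3 : ∑ i : Fin 16, ∑ j : Fin 16, (B i j) ^ 2 = 36) :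
    B 0 0 = 0 ∧
      (∀ i : Fin 16, 1 ≤ (i : ℕ) → (i : ℕ) < 8 → B i i = -2) ∧
      (∀ i : Fin 16, 8 ≤ (i : ℕ) → B i i = -1) ∧
      (∀ i j : Fin 16, i ≠ j → B i j = 0) := by
  have hB : B = diagonal spin9HessianDiag :=
    eq_diagonal_of_sum_sum_sq_eq B _ (h3.trans (sum_two_mul_spin9HessianDiag_sub_sq B h1 h2).symm)
  subst hB
  exact ⟨diagonal_apply_eq _ _, fun i h1 h8 => (diagonal_apply_eq _ i).trans
    (spin9HessianDiag_of_lt_eight h1 h8), fun i h => (diagonal_apply_eq _ i).trans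
    (spin9HessianDiag_of_eight_le h), fun i j hij => diagonal_apply_ne _ hij⟩

/-- Rigidity of the Hessian of the Busemann function in the splitting theorem for
Spin(9) holonomy: if `B` is a symmetric real 16×16 matrix (indices `0, …, 15`
corresponding to `1, …, 16`) with `∑_{i=2}^{8} Bᵢᵢ = -14`, `∑_{α=9}^{16} B_{αα} = -8`
and `∑ B² = 36`, then `B` is diagonal with `B₁₁ = 0`, `Bᵢᵢ = -2` for `2 ≤ i ≤ 8` and
`B_{αα} = -1` for `9 ≤ α ≤ 16`. -/
theorem spin9_busemann_hessian_rigidity (B : Matrix (Fin 16) (Fin 16) ℝ)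
    (hsymm : ∀ i j : Fin 16, B i j = B j i)
    (h1 : ∑ i ∈ Finset.univ.filter (fun i : Fin 16 => 1 ≤ (i : ℕ) ∧ (i : ℕ) < 8), B i i
      = -14)
    (h2 : ∑ i ∈ Finset.univ.filter (fun i : Fin 16 => 8 ≤ (i : ℕ)), B i i = -8)
    (h3 : ∑ i : Fin 16, ∑ j : Fin 16, (B i j) ^ 2 = 36) :
    B 0 0 = 0 ∧
      (∀ i : Fin 16, 1 ≤ (i : ℕ) → (i : ℕ) < 8 → B i i = -2) ∧
      (∀ i : Fin 16, 8 ≤ (i : ℕ) → B i i = -1) ∧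
      (∀ i j : Fin 16, i ≠ j → B i j = 0) :=
  spin9_busemann_hessian_rigidity_general B h1 h2 h3
end
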